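/- Let α ∈ ℝ, τ > 0, h > 0 and let ρ, u, x, p : ℤ × ℤ → ℝ be grid functions with ρ(n,i) > 0, p(n,i) > 0, 2√(p(n,i)) − ρ(n,i) ≠ 0, and the bracket D(n,i) = 4/(ρ(n,i)ρ(n−1,i)) − (2/√(p(n,i)))(1/ρ(n,i) + 1/ρ(n−1,i)) + 1/p(n,i) ≠ 0 for all (n,i), satisfying the two-layer scheme in mass Lagrangian coordinates with horizontal bottom: (i) (ρ(n,i) − ρ(n−1,i))/τ + (1/2) ρ(n,i) ρ(n−1,i) [ (u(n,i+1) − u(n,i))/h + (u(n−1,i+1) − u(n−1,i))/h ] = 0; (ii) (u(n,i) − u(n−1,i))/τ + (Q(n,i) − Q(n,i−1))/h = 0, where Q(n,i) = 1/D(n,i) − α²/√(p(n,i)); (iii) (x(n+1,i) − x(n,i))/τ = u(n,i); (iv) (x(n−1,i+1) − x(n−1,i))/h + (x(n,i+1) − x(n,i))/h = 1/√(p(n−1,i)) + 1/√(p(n,i)) = 2/ρ(n−1,i); for all (n,i). Define E(n,i) = u(n,i)²/2 + p(n,i)/(2√(p(n,i)) − ρ(n,i)) + α²(2√(p(n,i))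 − ρ(n,i))/(2 p(n,i) ρ(n,i)) and S(n,i) = (1/2)(u(n,i+1) + u(n−1,i+1)) Q(n,i). Then the finite-difference conservation law of energy holds: (E(n,i) − E(n−1,i))/τ + (S(n,i) − S(n,i−1))/h = 0 for all (n,i). -/

import Mathlib

/-
Eliminating `u_ť` with the momentum equation and `u_s + ǔ_s` with the continuity equation
reduces the energy balance of a cell to the pointwise identity
`Φ(ρ, p) - Φ(ρ̌, p̌) + (1/ρ - 1/ρ̌) Q = 0` for the potential energy `Φ`, i.e. `E` without its
kinetic part. The state equation makes `ρ̌` the harmonic mean of `√p` and `√p̌`; in terms of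
`r = √p` and `r' = √p̌` the bracket becomes `D = (2r - ρ)/(ρ r r')`, and the identity is a
rational-function identity in `ρ, r, r'`.
-/

/-- The bracket D appearing in the flux of the two-layer mass Lagrangian scheme. -/
noncomputable def Dbr (ρ p : ℤ → ℤ → ℝ) (n i : ℤ) : ℝ :=
  4 / (ρ n i * ρ (n - 1) i)
    - (2 / Real.sqrt (p n i)) * (1 / ρ n i + 1 / ρ (n - 1) i)
    + 1 / p n i

/-- The flux quantity Q of the two-layer mass Lagrangian scheme. -/
noncomputable def Qfl (α : ℝ) (ρ p : ℤ → ℤ → ℝ) (n i : ℤ) : ℝ :=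
  1 / Dbr ρ p n i - α ^ 2 / Real.sqrt (p n i)

/-- The energy density E of the two-layer mass Lagrangian scheme. -/
noncomputable def Een (α : ℝ) (ρ u p : ℤ → ℤ → ℝ) (n i : ℤ) : ℝ :=
  (u n i) ^ 2 / 2 + p n i / (2 * Real.sqrt (p n i) - ρ n i)
    + α ^ 2 * (2 * Real.sqrt (p n i) - ρ n i) / (2 * p n i * ρ n i)

/-- The energy flux S of the two-layer mass Lagrangian scheme. -/
noncomputable def Sen (α : ℝ) (ρ u p : ℤ → ℤ → ℝ) (n i : ℤ) : ℝ :=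
  (1 / 2) * (u n (i + 1) + u (n - 1) (i + 1)) * Qfl α ρ p n i

noncomputable def potentialEnergy (α a p : ℝ) : ℝ :=
  p / (2 * Real.sqrt p - a) + α ^ 2 * (2 * Real.sqrt p - a) / (2 * p * a)

theorem Een_eq_add_potentialEnergy (α : ℝ) (ρ u p : ℤ → ℤ → ℝ) (n i : ℤ) :
    Een α ρ u p n i = u n i ^ 2 / 2 + potentialEnergy α (ρ n i) (p n i) :=
  add_assoc _ _ _

theorem eq_harmonic_of_inv_add_inv {b r r' : ℝ} (hr : 0 < r) (hr' : 0 < r')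
    (hstate : 1 / r' + 1 / r = 2 / b) : b = 2 * r * r' / (r + r') := by
  have hb : 0 < b := (div_pos_iff_of_pos_left two_pos).1 (hstate ▸ by positivity)
  field_simp at hstate ⊢
  linarith

section HarmonicState

variable {ρ p : ℤ → ℤ → ℝ} {n i : ℤ}

theorem Dbr_eq_of_harmonic (hρ : 0 < ρ n i) (hp : 0 < p n i) (hp' : 0 < p (n - 1) i)
    (hb : ρ (n - 1) i = 2 * Real.sqrt (p n i) * Real.sqrt (p (n - 1) i)
      / (Real.sqrt (p n i) + Real.sqrt (p (n - 1) i))) :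
    Dbr ρ p n i = (2 * Real.sqrt (p n i) - ρ n i)
      / (ρ n i * Real.sqrt (p n i) * Real.sqrt (p (n - 1) i)) := by
  have hr := Real.sqrt_pos.2 hp
  have hr' := Real.sqrt_pos.2 hp'
  rw [Dbr, hb]
  field_simp
  rw [Real.sq_sqrt hp.le]
  ring

theorem Qfl_eq_of_harmonic (α : ℝ) (hρ : 0 < ρ n i) (hp : 0 < p n i) (hp' : 0 < p (n - 1) i)
    (hb : ρ (n - 1) i = 2 * Real.sqrt (p n i) * Real.sqrt (p (n - 1) i)
      / (Real.sqrt (p n i) + Real.sqrt (p (n - 1) i))) :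
    Qfl α ρ p n i = ρ n i * Real.sqrt (p n i) * Real.sqrt (p (n - 1) i)
      / (2 * Real.sqrt (p n i) - ρ n i) - α ^ 2 / Real.sqrt (p n i) := by
  rw [Qfl, Dbr_eq_of_harmonic hρ hp hp' hb, one_div_div]

end HarmonicState

theorem potentialEnergy_sub_add_work (α a r r' : ℝ) (ha : 0 < a) (hr : 0 < r) (hr' : 0 < r')
    (hsr : 2 * r - a ≠ 0) :
    potentialEnergy α a (r ^ 2) - potentialEnergy α (2 * r * r' / (r + r')) (r' ^ 2)
      + (1 / a - 1 / (2 * r * r' / (r + r'))) * (a * r * r' / (2 * r - a) - α ^ 2 / r) = 0 := by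
  have hsr' : 2 * r' - 2 * r * r' / (r + r') = 2 * r' ^ 2 / (r + r') := by
    field_simp
    ring
  have hsr₂ : r * 2 - a ≠ 0 := by rwa [mul_comm]
  simp only [potentialEnergy, Real.sqrt_sq hr.le, Real.sqrt_sq hr'.le, hsr']
  field_simp
  ring

theorem energy_cell_balance {τ h a b u₀ u₁ v₀ v₁ Q₀ Q₁ W W' : ℝ} (hτ : τ ≠ 0) (hh : h ≠ 0)
    (ha : a ≠ 0) (hb : b ≠ 0)
    (hcont : (a - b) / τ + 1 / 2 * a * b * ((u₁ - u₀) / h + (v₁ - v₀) / h) = 0)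
    (hmom : (u₀ - v₀) / τ + (Q₁ - Q₀) / h = 0)
    (hwork : W - W' + (1 / a - 1 / b) * Q₁ = 0) :
    (u₀ ^ 2 / 2 + W - (v₀ ^ 2 / 2 + W')) / τ
      + (1 / 2 * (u₁ + v₁) * Q₁ - 1 / 2 * (u₀ + v₀) * Q₀) / h = 0 := by
  have hvel : u₁ + v₁ - (u₀ + v₀) = 2 * h / τ * (1 / a - 1 / b) := by
    field_simp at hcont ⊢
    linear_combination hcont
  have hflux : Q₀ = Q₁ + h / τ * (u₀ - v₀) := by
    field_simp at hmom ⊢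
    linarith
  calc _ = (W - W' + (1 / a - 1 / b) * Q₁) / τ
          + (1 / 2 * (u₁ + v₁ - (u₀ + v₀) - 2 * h / τ * (1 / a - 1 / b)) * Q₁) / h := by
        rw [hflux]
        field_simp
        ring
    _ = 0 := by
        rw [hwork, hvel]
        ring

theorem fd_mass_lagrangian_energy_general
    (α τ h : ℝ) (hτ : 0 < τ) (hh : 0 < h)
    (ρ u x p : ℤ → ℤ → ℝ)
    (hρ : ∀ n i, 0 < ρ n i)
    (hp : ∀ n i, 0 < p n i)
    (hsr : ∀ n i, 2 * Real.sqrt (p n i) - ρ n i ≠ 0)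
    (hcont : ∀ n i : ℤ,
      (ρ n i - ρ (n - 1) i) / τ
        + (1 / 2) * ρ n i * ρ (n - 1) i
          * ((u n (i + 1) - u n i) / h + (u (n - 1) (i + 1) - u (n - 1) i) / h) = 0)
    (hmom : ∀ n i : ℤ,
      (u n i - u (n - 1) i) / τ + (Qfl α ρ p n i - Qfl α ρ p n (i - 1)) / h = 0)
    (hstate : ∀ n i : ℤ,
      (x (n - 1) (i + 1) - x (n - 1) i) / h + (x n (i + 1) - x n i) / h
          = 1 / Real.sqrt (p (n - 1) i) + 1 / Real.sqrt (p n i) ∧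
      1 / Real.sqrt (p (n - 1) i) + 1 / Real.sqrt (p n i) = 2 / ρ (n - 1) i) :
    ∀ n i : ℤ,
      (Een α ρ u p n i - Een α ρ u p (n - 1) i) / τ
        + (Sen α ρ u p n i - Sen α ρ u p n (i - 1)) / h = 0 := by
  intro n i
  have hb := eq_harmonic_of_inv_add_inv (Real.sqrt_pos.2 (hp n i))
    (Real.sqrt_pos.2 (hp (n - 1) i)) (hstate n i).2
  have hwork := potentialEnergy_sub_add_work α (ρ n i) _ _ (hρ n i)
    (Real.sqrt_pos.2 (hp n i)) (Real.sqrt_pos.2 (hp (n - 1) i)) (hsr n i)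
  rw [Real.sq_sqrt (hp n i).le, Real.sq_sqrt (hp (n - 1) i).le, ← hb,
    ← Qfl_eq_of_harmonic α (hρ n i) (hp n i) (hp (n - 1) i) hb] at hwork
  simp only [Een_eq_add_potentialEnergy, Sen, sub_add_cancel]
  exact energy_cell_balance hτ.ne' hh.ne' (hρ n i).ne' (hρ (n - 1) i).ne'
    (hcont n i) (hmom n i) hwork

/-- finite-difference energy conservation law for the two-layer
invariant scheme for the SMHD equations in mass Lagrangian coordinates with
horizontal bottom. -/
theorem fd_mass_lagrangian_energy
    (α τ h : ℝ) (hτ : 0 < τ) (hh : 0 < h)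
    (ρ u x p : ℤ → ℤ → ℝ)
    (hρ : ∀ n i, 0 < ρ n i)
    (hp : ∀ n i, 0 < p n i)
    (hsr : ∀ n i, 2 * Real.sqrt (p n i) - ρ n i ≠ 0)
    (hD : ∀ n i, Dbr ρ p n i ≠ 0)
    (hcont : ∀ n i : ℤ,
      (ρ n i - ρ (n - 1) i) / τ
        + (1 / 2) * ρ n i * ρ (n - 1) i
          * ((u n (i + 1) - u n i) / h + (u (n - 1) (i + 1) - u (n - 1) i) / h) = 0)
    (hmom : ∀ n i : ℤ,
      (u n i - u (n - 1) i) / τ + (Qfl α ρ p n i - Qfl α ρ p n (i - 1)) / h = 0)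
    (hkin : ∀ n i : ℤ, (x (n + 1) i - x n i) / τ = u n i)
    (hstate : ∀ n i : ℤ,
      (x (n - 1) (i + 1) - x (n - 1) i) / h + (x n (i + 1) - x n i) / h
          = 1 / Real.sqrt (p (n - 1) i) + 1 / Real.sqrt (p n i) ∧
      1 / Real.sqrt (p (n - 1) i) + 1 / Real.sqrt (p n i) = 2 / ρ (n - 1) i) :
    ∀ n i : ℤ,
      (Een α ρ u p n i - Een α ρ u p (n - 1) i) / τ
        + (Sen α ρ u p n i - Sen α ρ u p n (i - 1)) / h = 0 :=
  fd_mass_lagrangian_energy_general α τ h hτ hh ρ u x p hρ hp hsr hcont hmom hstate
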